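/- Let S be a Cu-semigroup satisfying O5, O6 and O7, and let λ ∈ F(S). Suppose that for all x, y ∈ S with λ(x) < ∞ and λ(y) < ∞ one has (x̂ ∧ ŷ)(λ) ≤ sup { λ(z) : z ≤ x, y }. Then S satisfies Edwards' condition for λ, i.e., inf { λ₁(x) + λ₂(y) : λ = λ₁ + λ₂ } = sup { λ(z) : z ≤ x, y } for all x, y ∈ S. -/

import Mathlib

open scoped ENNReal

namespace CuFormal

variable {S : Type*} [AddCommMonoid S] [PartialOrder S]

/-- The algebra-free way-below relation: `x ≪ y` iff whenever `y ≤ sup yₙ` for an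
increasing sequence with supremum, then `x ≤ yₙ` for some `n`. -/
def WayBelow (x y : S) : Prop :=
  ∀ f : ℕ → S, Monotone f → ∀ s : S, IsLUB (Set.range f) s → y ≤ s → ∃ n, x ≤ f n

/-- Positively ordered monoid with addition monotone. -/
def PosOrdered : Prop :=
  (∀ x : S, (0 : S) ≤ x) ∧ ∀ a b c : S, b ≤ c → a + b ≤ a + c

/-- O1: every increasing sequence has a supremum. -/
def AxO1 : Prop := ∀ f : ℕ → S, Monotone f → ∃ s : S, IsLUB (Set.range f) s

/-- O2: every element is the supremum of a ≪-increasing sequence. -/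
def AxO2 : Prop := ∀ x : S, ∃ f : ℕ → S, Monotone f ∧
  (∀ n, WayBelow (f n) (f (n + 1))) ∧ IsLUB (Set.range f) x

/-- O3 -/
def AxO3 : Prop := ∀ x₁ y₁ x₂ y₂ : S,
  WayBelow x₁ y₁ → WayBelow x₂ y₂ → WayBelow (x₁ + x₂) (y₁ + y₂)

/-- O4 -/
def AxO4 : Prop := ∀ f g : ℕ → S, Monotone f → Monotone g →
  ∀ a b : S, IsLUB (Set.range f) a → IsLUB (Set.range g) b →
    IsLUB (Set.range fun n => f n + g n) (a + b)

/-- A Cu-semigroup: positively ordered monoid satisfying O1–O4. -/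
def CuSemigroup : Prop :=
  PosOrdered (S := S) ∧ AxO1 (S := S) ∧ AxO2 (S := S) ∧ AxO3 (S := S) ∧ AxO4 (S := S)

/-- O5 -/
def AxO5 : Prop := ∀ x' x y w' w : S, WayBelow x' x → x ≤ y → WayBelow w' w →
  x + w ≤ y → ∃ z : S, x' + z ≤ y ∧ y ≤ x + z ∧ WayBelow w' z

/-- O6 -/
def AxO6 : Prop := ∀ x' x y z : S, WayBelow x' x → x ≤ y + z →
  ∃ y' z' : S, x' ≤ y' + z' ∧ y' ≤ x ∧ y' ≤ y ∧ z' ≤ x ∧ z' ≤ z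

/-- O7 -/
def AxO7 : Prop := ∀ x₁' x₁ x₂' x₂ w : S,
  WayBelow x₁' x₁ → x₁ ≤ w → WayBelow x₂' x₂ → x₂ ≤ w →
  ∃ x : S, WayBelow x₁' x ∧ WayBelow x₂' x ∧ x ≤ w ∧ x ≤ x₁ + x₂

/-- An ideal: a downward hereditary subsemigroup closed under suprema of increasing
sequences. -/
def IsIdeal (J : Set S) : Prop :=
  (0 : S) ∈ J ∧ (∀ x y : S, x ∈ J → y ∈ J → x + y ∈ J) ∧
  (∀ x y : S, y ∈ J → x ≤ y → x ∈ J) ∧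
  (∀ f : ℕ → S, Monotone f → (∀ n, f n ∈ J) →
    ∀ s : S, IsLUB (Set.range f) s → s ∈ J)

/-- Countably based. -/
def CountablyBased : Prop := ∃ B : Set S, B.Countable ∧
  ∀ x : S, ∃ f : ℕ → S, (∀ n, f n ∈ B) ∧ Monotone f ∧
    (∀ n, WayBelow (f n) (f (n + 1))) ∧ IsLUB (Set.range f) x

/-- A functional on `S`: preserves `0`, addition, order and suprema of increasing
sequences. -/
def IsFunctional (l : S → ℝ≥0∞) : Prop :=
  l 0 = 0 ∧ (∀ x y : S, l (x + y) = l x + l y) ∧ Monotone l ∧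
  (∀ f : ℕ → S, Monotone f → ∀ s : S, IsLUB (Set.range f) s → l s = ⨆ n, l (f n))

/-- `(x̂ ∧ ŷ)(λ) = inf { λ₁(x) + λ₂(y) : λ = λ₁ + λ₂ }`. -/
noncomputable def hatInf (x y : S) (l : S → ℝ≥0∞) : ℝ≥0∞ :=
  sInf {t : ℝ≥0∞ | ∃ l₁ l₂ : S → ℝ≥0∞, IsFunctional l₁ ∧ IsFunctional l₂ ∧
    (∀ u : S, l u = l₁ u + l₂ u) ∧ t = l₁ x + l₂ y}

/-- Edwards' condition for the functional `l`. -/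
def EdwardsFor (l : S → ℝ≥0∞) : Prop := ∀ x y : S,
  hatInf x y l = sSup {t : ℝ≥0∞ | ∃ z : S, z ≤ x ∧ z ≤ y ∧ t = l z}

/-- The ideal generated by a subset. -/
def idealGen (X : Set S) : Set S := ⋂₀ {J : Set S | IsIdeal J ∧ X ⊆ J}

/-!
Fix `x, y` and let `α = sup {λ(z) : z ≤ x, y}`; only `(x̂ ∧ ŷ)(λ) ≤ α + ε` with `α < ∞` needs
proof. Let `J` be the ideal of those `s` all of whose compactly contained elements have finite
`λ`-value, and let `T_x` be the set of `c ≪ z ≤ x` with `z ∈ J`; it is upward directed by O7.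
The hypothesis splits `λ = λ₁ + λ₂` with `λ₁(c₁) + λ₂(c₂) ≤ α + ε` for each `c₁ ∈ T_x`,
`c₂ ∈ T_y`, and by compactness of `[0, ∞]^S` one additive monotone splitting `λ = g₁ + g₂` works
for all such pairs at once. Regularising `gᵢ` over the approximations through `J` gives
functionals `μᵢ` with `μ₁ + μ₂ = λ` on `J`; off `J` the missing mass is infinite and is supplied
by `∞ · 1_{S ∖ K_x}` and `∞ · 1_{S ∖ K_y}`, where `K_x` is the ideal generated by `x` and `J`.
That these add up to `∞ · 1_{S ∖ J}` is the Riesz-type estimate `λ(z) ≤ n m α` for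
`z ≤ n x, m y`, which follows from O6.
-/

set_option linter.unusedSectionVars false

theorem PosOrdered.add_le_add (hP : PosOrdered (S := S)) {a b c d : S} (hab : a ≤ b)
    (hcd : c ≤ d) : a + c ≤ b + d :=
  (hP.2 a c d hcd).trans (by simpa only [add_comm _ d] using hP.2 d a b hab)

section WayBelow

variable {a b c d s : S}

theorem WayBelow.le (h : WayBelow a b) : a ≤ b := by
  obtain ⟨n, hn⟩ := h (fun _ => b) monotone_const b
    ⟨by rintro z ⟨n, rfl⟩; exact le_rfl, fun z hz => hz ⟨0, rfl⟩⟩ le_rfl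
  exact hn

theorem WayBelow.mono (h : WayBelow b c) (hab : a ≤ b) (hcd : c ≤ d) : WayBelow a d :=
  fun f hf s hs hds => (h f hf s hs (hcd.trans hds)).imp fun _ hn => hab.trans hn

theorem zero_wayBelow (hP : PosOrdered (S := S)) (s : S) : WayBelow 0 s :=
  fun _ _ _ _ _ => ⟨0, hP.1 _⟩

theorem WayBelow.exists_between (hO2 : AxO2 (S := S)) (h : WayBelow a s) :
    ∃ m, WayBelow a m ∧ WayBelow m s := by
  obtain ⟨f, hf, hfwb, hfs⟩ := hO2 s
  obtain ⟨n, hn⟩ := h f hf s hfs le_rfl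
  exact ⟨f (n + 1), (hfwb n).mono hn le_rfl, (hfwb (n + 1)).mono le_rfl (hfs.1 ⟨n + 2, rfl⟩)⟩

theorem WayBelow.exists_ge_ge (hO2 : AxO2 (S := S)) (ha : WayBelow a s) (hb : WayBelow b s) :
    ∃ c, a ≤ c ∧ b ≤ c ∧ WayBelow c s := by
  obtain ⟨f, hf, hfwb, hfs⟩ := hO2 s
  obtain ⟨n, hn⟩ := ha f hf s hfs le_rfl
  obtain ⟨m, hm⟩ := hb f hf s hfs le_rfl
  exact ⟨f (max n m), hn.trans (hf (le_max_left n m)), hm.trans (hf (le_max_right n m)),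
    (hfwb (max n m)).mono le_rfl (hfs.1 ⟨max n m + 1, rfl⟩)⟩

theorem WayBelow.exists_wayBelow_wayBelow_le_add (hP : PosOrdered (S := S))
    (hO2 : AxO2 (S := S)) (hO4 : AxO4 (S := S)) (h : WayBelow a (b + c)) :
    ∃ b' c', WayBelow b' b ∧ WayBelow c' c ∧ a ≤ b' + c' := by
  obtain ⟨f, hf, hfwb, hfb⟩ := hO2 b
  obtain ⟨g, hg, hgwb, hgc⟩ := hO2 c
  obtain ⟨n, hn⟩ := h _ (fun i j hij => hP.add_le_add (hf hij) (hg hij)) (b + c)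
    (hO4 f g hf hg b c hfb hgc) le_rfl
  exact ⟨f n, g n, (hfwb n).mono le_rfl (hfb.1 ⟨n + 1, rfl⟩),
    (hgwb n).mono le_rfl (hgc.1 ⟨n + 1, rfl⟩), hn⟩

end WayBelow

section Functional

variable {l : S → ℝ≥0∞}

theorem IsFunctional.add {l' : S → ℝ≥0∞} (hl : IsFunctional l) (hl' : IsFunctional l') :
    IsFunctional fun u => l u + l' u := by
  refine ⟨by simp only [hl.1, hl'.1, add_zero], fun u v => ?_,
    fun u v huv => add_le_add (hl.2.2.1 huv) (hl'.2.2.1 huv), fun f hf s hs => ?_⟩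
  · simp only [hl.2.1, hl'.2.1]
    exact add_add_add_comm _ _ _ _
  · show l s + l' s = ⨆ n, l (f n) + l' (f n)
    rw [hl.2.2.2 f hf s hs, hl'.2.2.2 f hf s hs]
    exact ENNReal.iSup_add_iSup_of_monotone (hl.2.2.1.comp hf) (hl'.2.2.1.comp hf)

theorem IsFunctional.apply_le_of_forall_wayBelow (hl : IsFunctional l) (hO2 : AxO2 (S := S))
    {s : S} {C : ℝ≥0∞} (h : ∀ t, WayBelow t s → l t ≤ C) : l s ≤ C := by
  obtain ⟨f, hf, hfwb, hfs⟩ := hO2 s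
  rw [hl.2.2.2 f hf s hfs]
  exact iSup_le fun n => h _ ((hfwb n).mono le_rfl (hfs.1 ⟨n + 1, rfl⟩))

theorem IsFunctional.apply_le_add_of_le_add (hl : IsFunctional l) (hO2 : AxO2 (S := S))
    (hO6 : AxO6 (S := S)) {z a b : S} {β γ : ℝ≥0∞} (hz : z ≤ a + b)
    (hβ : ∀ u, u ≤ z → u ≤ a → l u ≤ β) (hγ : ∀ u, u ≤ z → u ≤ b → l u ≤ γ) :
    l z ≤ β + γ :=
  hl.apply_le_of_forall_wayBelow hO2 fun t ht => by
    obtain ⟨p, q, htpq, hpz, hpa, hqz, hqb⟩ := hO6 t z a b ht hz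
    calc l t ≤ l (p + q) := hl.2.2.1 htpq
      _ = l p + l q := hl.2.1 p q
      _ ≤ β + γ := add_le_add (hβ p hpz hpa) (hγ q hqz hqb)

theorem IsFunctional.apply_le_nsmul_mul (hl : IsFunctional l) (hO2 : AxO2 (S := S))
    (hO6 : AxO6 (S := S)) {x y : S} {α : ℝ≥0∞} (hα : ∀ u, u ≤ x → u ≤ y → l u ≤ α) (n : ℕ)
    {z : S} (hzx : z ≤ x) (hzy : z ≤ n • y) : l z ≤ n * α := by
  induction n generalizing z with
  | zero => exact (hl.2.2.1 (zero_nsmul y ▸ hzy)).trans (by simp [hl.1])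
  | succ n ih =>
    calc l z ≤ n * α + α := hl.apply_le_add_of_le_add hO2 hO6 (succ_nsmul y n ▸ hzy)
          (fun u huz hu => ih (huz.trans hzx) hu) (fun u huz hu => hα u (huz.trans hzx) hu)
      _ = (n + 1 : ℕ) * α := by push_cast; ring

theorem sSup_le_hatInf (x y : S) :
    sSup {t : ℝ≥0∞ | ∃ z : S, z ≤ x ∧ z ≤ y ∧ t = l z} ≤ hatInf x y l := by
  refine le_sInf ?_
  rintro _ ⟨l₁, l₂, hl₁, hl₂, hsum, rfl⟩
  refine sSup_le ?_
  rintro _ ⟨z, hzx, hzy, rfl⟩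
  exact (hsum z).trans_le (add_le_add (hl₁.2.2.1 hzx) (hl₂.2.2.1 hzy))

end Functional

section Ideal

def approxIdeal (D : Set S) : Set S := {s | ∀ t, WayBelow t s → t ∈ D}

theorem approxIdeal_mono {D D' : Set S} (h : D ⊆ D') : approxIdeal D ⊆ approxIdeal D' :=
  fun _ hs t ht => h (hs t ht)

theorem isLowerSet_approxIdeal (D : Set S) : IsLowerSet (approxIdeal D) :=
  fun _ _ hts ht r hr => ht r (hr.mono le_rfl hts)

theorem isIdeal_approxIdeal (hP : PosOrdered (S := S)) (hO2 : AxO2 (S := S))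
    (hO4 : AxO4 (S := S)) {D : Set S} (hD : IsLowerSet D) (h0 : (0 : S) ∈ D)
    (hadd : ∀ a ∈ D, ∀ b ∈ D, a + b ∈ D) : IsIdeal (approxIdeal D) := by
  refine ⟨fun t ht => hD ht.le h0, fun u v hu hv t ht => ?_,
    fun _ _ hv huv => isLowerSet_approxIdeal D huv hv, fun f hf hmem s hs t ht => ?_⟩
  · obtain ⟨u', v', hu', hv', htle⟩ := ht.exists_wayBelow_wayBelow_le_add hP hO2 hO4
    exact hD htle (hadd _ (hu _ hu') _ (hv _ hv'))
  · obtain ⟨m, htm, hms⟩ := ht.exists_between hO2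
    obtain ⟨n, hmn⟩ := hms f hf s hs le_rfl
    exact hmem n t (htm.mono le_rfl hmn)

variable {l : S → ℝ≥0∞}

def finiteIdeal (l : S → ℝ≥0∞) : Set S := approxIdeal {t | l t < ∞}

/-- The ideal generated by `x` and `finiteIdeal l`. -/
def finiteIdealAdjoin (l : S → ℝ≥0∞) (x : S) : Set S :=
  approxIdeal {t | ∃ (n : ℕ) (v : S), l v < ∞ ∧ t ≤ n • x + v}

theorem zero_mem_finiteIdeal (hl : IsFunctional l) : (0 : S) ∈ finiteIdeal l :=
  fun _ ht => (hl.2.2.1 ht.le).trans_lt (by simp [hl.1])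

theorem isIdeal_finiteIdeal (hP : PosOrdered (S := S)) (hO2 : AxO2 (S := S))
    (hO4 : AxO4 (S := S)) (hl : IsFunctional l) : IsIdeal (finiteIdeal l) :=
  isIdeal_approxIdeal hP hO2 hO4 (fun _ _ hba ha => (hl.2.2.1 hba).trans_lt ha)
    (by simp [hl.1]) fun a ha b hb => by simp_all [hl.2.1 a b]

theorem isIdeal_finiteIdealAdjoin (hP : PosOrdered (S := S)) (hO2 : AxO2 (S := S))
    (hO4 : AxO4 (S := S)) (hl : IsFunctional l) (x : S) : IsIdeal (finiteIdealAdjoin l x) := by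
  refine isIdeal_approxIdeal hP hO2 hO4 ?_ ⟨0, 0, by simp [hl.1], by simp⟩ ?_
  · rintro _ t hts ⟨n, v, hv, hs⟩
    exact ⟨n, v, hv, hts.trans hs⟩
  · rintro a ⟨n, v, hv, ha⟩ b ⟨m, w, hw, hb⟩
    refine ⟨n + m, v + w, by simp [hl.2.1, hv, hw], ?_⟩
    calc a + b ≤ (n • x + v) + (m • x + w) := hP.add_le_add ha hb
      _ = (n + m) • x + (v + w) := by rw [add_add_add_comm, add_nsmul]

theorem finiteIdeal_subset_finiteIdealAdjoin (x : S) :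
    finiteIdeal l ⊆ finiteIdealAdjoin l x :=
  approxIdeal_mono fun t ht => ⟨0, t, ht, by simp⟩

theorem mem_finiteIdealAdjoin_self (hl : IsFunctional l) (x : S) :
    x ∈ finiteIdealAdjoin l x :=
  fun _ ht => ⟨1, 0, by simp [hl.1], by simpa using ht.le⟩

theorem finiteIdealAdjoin_inter_subset (hl : IsFunctional l) (hO2 : AxO2 (S := S))
    (hO6 : AxO6 (S := S)) {x y : S} {α : ℝ≥0∞} (hα : ∀ z, z ≤ x → z ≤ y → l z ≤ α)
    (hα_top : α ≠ ∞) : finiteIdealAdjoin l x ∩ finiteIdealAdjoin l y ⊆ finiteIdeal l := by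
  rintro s ⟨hsx, hsy⟩ t ht
  obtain ⟨n, v, hv, htx⟩ := hsx t ht
  obtain ⟨m, w, hw, hty⟩ := hsy t ht
  have hnm : ∀ u, u ≤ n • x → u ≤ m • y → l u ≤ n * (m * α) := fun u hux huy =>
    hl.apply_le_nsmul_mul hO2 hO6
      (fun u' hu'y hu'x => hl.apply_le_nsmul_mul hO2 hO6 hα m hu'x hu'y) n huy hux
  have hlt : l t ≤ (n * (m * α) + l w) + l v :=
    hl.apply_le_add_of_le_add hO2 hO6 htx
      (fun u hut hux => hl.apply_le_add_of_le_add hO2 hO6 (hut.trans hty)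
        (fun u' hu'u hu'y => hnm u' (hu'u.trans hux) hu'y) fun u' _ hu'w => hl.2.2.1 hu'w)
      fun u _ huv => hl.2.2.1 huv
  exact hlt.trans_lt (by finiteness)

end Ideal

section Indicator

theorem isFunctional_indicator_compl_top (hP : PosOrdered (S := S)) {K : Set S}
    (hK : IsIdeal K) : IsFunctional (Kᶜ.indicator fun _ => ∞) := by
  obtain ⟨hK0, hKadd, hKle, hKsup⟩ := hK
  have hmem : ∀ u v, u + v ∈ K ↔ u ∈ K ∧ v ∈ K := fun u v =>
    ⟨fun h => ⟨hKle u _ h (by simpa using hP.2 u 0 v (hP.1 v)),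
      hKle v _ h (by simpa [add_comm u] using hP.2 v 0 u (hP.1 u))⟩,
     fun h => hKadd u v h.1 h.2⟩
  refine ⟨by simp [hK0], fun u v => ?_, fun u v huv => ?_, fun f hf s hs => ?_⟩
  · by_cases hu : u ∈ K <;> by_cases hv : v ∈ K <;> simp [hu, hv, hmem]
  · by_cases hv : v ∈ K
    · simp [hv, hKle u v hv huv]
    · simp [hv]
  · by_cases hall : ∀ n, f n ∈ K
    · simp [hall, hKsup f hf hall s hs]
    · obtain ⟨n, hn⟩ := not_forall.1 hall
      have hs : s ∉ K := fun h => hn (hKle _ s h (hs.1 ⟨n, rfl⟩))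
      rw [Set.indicator_of_mem (Set.mem_compl hs)]
      exact (top_unique (le_iSup_of_le (f := fun n => Kᶜ.indicator (fun _ => ∞) (f n)) n
        (by simp [hn]))).symm

theorem indicator_compl_top_add_indicator_compl_top {α : Type*} (K₁ K₂ : Set α) (u : α) :
    K₁ᶜ.indicator (fun _ => ∞) u + K₂ᶜ.indicator (fun _ => ∞) u =
      (K₁ ∩ K₂)ᶜ.indicator (fun _ => (∞ : ℝ≥0∞)) u := by
  by_cases h₁ : u ∈ K₁ <;> by_cases h₂ : u ∈ K₂ <;> simp [h₁, h₂]

end Indicator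

section Regularize

def IsAdditiveMonotone (g : S → ℝ≥0∞) : Prop :=
  g 0 = 0 ∧ (∀ x y : S, g (x + y) = g x + g y) ∧ Monotone g

variable {l g : S → ℝ≥0∞} {s t : S}

def finiteApprox (l : S → ℝ≥0∞) (s : S) : Set S := {t | ∃ z ∈ finiteIdeal l, WayBelow t z ∧ z ≤ s}

noncomputable def regularize (l g : S → ℝ≥0∞) (s : S) : ℝ≥0∞ := ⨆ t ∈ finiteApprox l s, g t

theorem le_of_mem_finiteApprox (ht : t ∈ finiteApprox l s) : t ≤ s := by
  obtain ⟨z, -, htz, hzs⟩ := ht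
  exact htz.le.trans hzs

theorem apply_lt_top_of_mem_finiteApprox (ht : t ∈ finiteApprox l s) : l t < ∞ := by
  obtain ⟨z, hz, htz, -⟩ := ht
  exact hz t htz

theorem finiteApprox_mono {s' : S} (h : s ≤ s') : finiteApprox l s ⊆ finiteApprox l s' :=
  fun _ ⟨z, hz, htz, hzs⟩ => ⟨z, hz, htz, hzs.trans h⟩

theorem mem_finiteApprox_of_wayBelow (hs : s ∈ finiteIdeal l) (ht : WayBelow t s) :
    t ∈ finiteApprox l s :=
  ⟨s, hs, ht, le_rfl⟩

theorem zero_mem_finiteApprox (hP : PosOrdered (S := S)) (hl : IsFunctional l) (s : S) :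
    (0 : S) ∈ finiteApprox l s :=
  ⟨0, zero_mem_finiteIdeal hl, zero_wayBelow hP 0, hP.1 s⟩

theorem add_mem_finiteApprox (hP : PosOrdered (S := S)) (hO2 : AxO2 (S := S))
    (hO3 : AxO3 (S := S)) (hO4 : AxO4 (S := S)) (hl : IsFunctional l) {a b s₁ s₂ : S}
    (ha : a ∈ finiteApprox l s₁) (hb : b ∈ finiteApprox l s₂) :
    a + b ∈ finiteApprox l (s₁ + s₂) := by
  obtain ⟨z₁, hz₁, haz₁, hz₁s⟩ := ha
  obtain ⟨z₂, hz₂, hbz₂, hz₂s⟩ := hb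
  exact ⟨z₁ + z₂, (isIdeal_finiteIdeal hP hO2 hO4 hl).2.1 _ _ hz₁ hz₂, hO3 _ _ _ _ haz₁ hbz₂,
    hP.add_le_add hz₁s hz₂s⟩

theorem exists_mem_finiteApprox_le_add (hP : PosOrdered (S := S)) (hO2 : AxO2 (S := S))
    (hO4 : AxO4 (S := S)) (hO6 : AxO6 (S := S)) {s₁ s₂ : S} (ht : t ∈ finiteApprox l (s₁ + s₂)) :
    ∃ a ∈ finiteApprox l s₁, ∃ b ∈ finiteApprox l s₂, t ≤ a + b := by
  obtain ⟨z, hz, htz, hzs⟩ := ht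
  obtain ⟨w, htw, hwz⟩ := htz.exists_between hO2
  obtain ⟨a, b, hwab, haz, has, hbz, hbs⟩ := hO6 w z s₁ s₂ hwz hzs
  obtain ⟨a', b', ha', hb', htab⟩ :=
    (htw.mono le_rfl hwab).exists_wayBelow_wayBelow_le_add hP hO2 hO4
  exact ⟨a', ⟨a, isLowerSet_approxIdeal _ haz hz, ha', has⟩,
    b', ⟨b, isLowerSet_approxIdeal _ hbz hz, hb', hbs⟩, htab⟩

theorem exists_mem_finiteApprox_of_isLUB (hO2 : AxO2 (S := S)) {f : ℕ → S} (hf : Monotone f)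
    (hs : IsLUB (Set.range f) s) (ht : t ∈ finiteApprox l s) : ∃ n, t ∈ finiteApprox l (f n) := by
  obtain ⟨z, hz, htz, hzs⟩ := ht
  obtain ⟨w, htw, hwz⟩ := htz.exists_between hO2
  obtain ⟨n, hwn⟩ := hwz f hf s hs hzs
  exact ⟨n, w, isLowerSet_approxIdeal _ hwz.le hz, htw, hwn⟩

theorem directedOn_finiteApprox (hP : PosOrdered (S := S)) (hO2 : AxO2 (S := S))
    (hO4 : AxO4 (S := S)) (hO7 : AxO7 (S := S)) (hl : IsFunctional l) (s : S) :
    DirectedOn (· ≤ ·) (finiteApprox l s) := by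
  rintro a ⟨z₁, hz₁, haz₁, hz₁s⟩ b ⟨z₂, hz₂, hbz₂, hz₂s⟩
  obtain ⟨u, hau, hbu, hus, huz⟩ := hO7 a z₁ b z₂ s haz₁ hz₁s hbz₂ hz₂s
  obtain ⟨c, hac, hbc, hcu⟩ := hau.exists_ge_ge hO2 hbu
  have hu : u ∈ finiteIdeal l :=
    isLowerSet_approxIdeal _ huz ((isIdeal_finiteIdeal hP hO2 hO4 hl).2.1 _ _ hz₁ hz₂)
  exact ⟨c, ⟨u, hu, hcu, hus⟩, hac, hbc⟩

theorem le_regularize (ht : t ∈ finiteApprox l s) : g t ≤ regularize l g s :=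
  le_iSup₂_of_le t ht le_rfl

theorem regularize_mono : Monotone (regularize l g) :=
  fun _ _ h => biSup_mono fun _ ht => finiteApprox_mono h ht

theorem isFunctional_regularize (hP : PosOrdered (S := S)) (hO2 : AxO2 (S := S))
    (hO3 : AxO3 (S := S)) (hO4 : AxO4 (S := S)) (hO6 : AxO6 (S := S)) (hl : IsFunctional l)
    (hg : IsAdditiveMonotone g) : IsFunctional (regularize l g) := by
  refine ⟨nonpos_iff_eq_zero.1 (iSup₂_le fun t ht => hg.1 ▸ hg.2.2 (le_of_mem_finiteApprox ht)),
    fun s₁ s₂ => le_antisymm ?_ ?_, regularize_mono,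
    fun f hf s hs => le_antisymm ?_ (iSup_le fun n => regularize_mono (hs.1 ⟨n, rfl⟩))⟩
  · refine iSup₂_le fun t ht => ?_
    obtain ⟨a, ha, b, hb, htab⟩ := exists_mem_finiteApprox_le_add hP hO2 hO4 hO6 ht
    calc g t ≤ g (a + b) := hg.2.2 htab
      _ = g a + g b := hg.2.1 a b
      _ ≤ regularize l g s₁ + regularize l g s₂ :=
        add_le_add (le_regularize ha) (le_regularize hb)
  · refine ENNReal.biSup_add_biSup_le ⟨0, zero_mem_finiteApprox hP hl s₁⟩
      ⟨0, zero_mem_finiteApprox hP hl s₂⟩ fun a ha b hb => ?_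
    exact hg.2.1 a b ▸ le_regularize (add_mem_finiteApprox hP hO2 hO3 hO4 hl ha hb)
  · refine iSup₂_le fun t ht => ?_
    obtain ⟨n, hn⟩ := exists_mem_finiteApprox_of_isLUB hO2 hf hs ht
    exact le_iSup_of_le n (le_regularize hn)

theorem regularize_add_regularize (hP : PosOrdered (S := S)) (hO2 : AxO2 (S := S))
    (hO4 : AxO4 (S := S)) (hO7 : AxO7 (S := S)) (hl : IsFunctional l) {g₁ g₂ : S → ℝ≥0∞}
    (hg₁ : Monotone g₁) (hg₂ : Monotone g₂) (hsum : ∀ u, g₁ u + g₂ u = g u) (s : S) :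
    regularize l g₁ s + regularize l g₂ s = regularize l g s := by
  refine le_antisymm (ENNReal.biSup_add_biSup_le ⟨0, zero_mem_finiteApprox hP hl s⟩
    ⟨0, zero_mem_finiteApprox hP hl s⟩ fun a ha b hb => ?_) (iSup₂_le fun t ht => ?_)
  · obtain ⟨c, hc, hac, hbc⟩ := directedOn_finiteApprox hP hO2 hO4 hO7 hl s a ha b hb
    calc g₁ a + g₂ b ≤ g₁ c + g₂ c := add_le_add (hg₁ hac) (hg₂ hbc)
      _ = g c := hsum c
      _ ≤ regularize l g s := le_regularize hc
  · rw [← hsum]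
    exact add_le_add (le_regularize ht) (le_regularize ht)

theorem regularize_self_add_indicator (hO2 : AxO2 (S := S)) (hl : IsFunctional l) (s : S) :
    regularize l l s + (finiteIdeal l)ᶜ.indicator (fun _ => ∞) s = l s := by
  by_cases hs : s ∈ finiteIdeal l
  · rw [Set.indicator_of_notMem (Set.notMem_compl_iff.2 hs), add_zero]
    exact le_antisymm (iSup₂_le fun t ht => hl.2.2.1 (le_of_mem_finiteApprox ht))
      (hl.apply_le_of_forall_wayBelow hO2 fun t ht =>
        le_regularize (mem_finiteApprox_of_wayBelow hs ht))
  · rw [Set.indicator_of_mem hs, add_top, eq_comm]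
    simp only [finiteIdeal, approxIdeal, Set.mem_ofPred_eq, not_forall, not_lt, top_le_iff] at hs
    obtain ⟨t, ht, hlt⟩ := hs
    exact top_unique (hlt ▸ hl.2.2.1 ht.le)

end Regularize

section Splitting

variable {l : S → ℝ≥0∞}

theorem isClosed_setOf_isAdditiveMonotone : IsClosed {g : S → ℝ≥0∞ | IsAdditiveMonotone g} :=
  (isClosed_setOfPred_map_zero S ℝ≥0∞).inter
    ((isClosed_setOfPred_map_add S ℝ≥0∞).inter isClosed_monotone)

theorem exists_split_of_hatInf_lt {T₁ T₂ : Set S} (hT₁ : T₁.Nonempty) (hT₂ : T₂.Nonempty)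
    (hd₁ : DirectedOn (· ≤ ·) T₁) (hd₂ : DirectedOn (· ≤ ·) T₂) {β : ℝ≥0∞}
    (hβ : ∀ c₁ ∈ T₁, ∀ c₂ ∈ T₂, hatInf c₁ c₂ l < β) :
    ∃ g₁ g₂ : S → ℝ≥0∞, IsAdditiveMonotone g₁ ∧ IsAdditiveMonotone g₂ ∧
      (∀ u, g₁ u + g₂ u = l u) ∧ ∀ c₁ ∈ T₁, ∀ c₂ ∈ T₂, g₁ c₁ + g₂ c₂ ≤ β := by
  let C : T₁ × T₂ → Set ((S → ℝ≥0∞) × (S → ℝ≥0∞)) := fun c =>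
    {p | IsAdditiveMonotone p.1 ∧ IsAdditiveMonotone p.2 ∧ (∀ u, p.1 u + p.2 u = l u) ∧
      p.1 c.1 + p.2 c.2 ≤ β}
  have hev : ∀ u v, Continuous fun p : (S → ℝ≥0∞) × (S → ℝ≥0∞) => p.1 u + p.2 v := fun u v =>
    ((continuous_apply u).comp continuous_fst).add ((continuous_apply v).comp continuous_snd)
  have hC_sum : IsClosed {p : (S → ℝ≥0∞) × (S → ℝ≥0∞) | ∀ u, p.1 u + p.2 u = l u} := by
    rw [Set.ofPred_forall]
    exact isClosed_iInter fun u => isClosed_eq (hev u u) continuous_const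
  have hC : ∀ c, IsClosed (C c) := fun c =>
    (isClosed_setOf_isAdditiveMonotone.preimage continuous_fst).inter <|
      (isClosed_setOf_isAdditiveMonotone.preimage continuous_snd).inter <|
        hC_sum.inter (isClosed_le (hev c.1 c.2) continuous_const)
  have hCd : Directed (· ⊇ ·) C := by
    rintro ⟨⟨a₁, ha₁⟩, ⟨a₂, ha₂⟩⟩ ⟨⟨b₁, hb₁⟩, ⟨b₂, hb₂⟩⟩
    obtain ⟨c₁, hc₁, hac₁, hbc₁⟩ := hd₁ a₁ ha₁ b₁ hb₁
    obtain ⟨c₂, hc₂, hac₂, hbc₂⟩ := hd₂ a₂ ha₂ b₂ hb₂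
    refine ⟨(⟨c₁, hc₁⟩, ⟨c₂, hc₂⟩), ?_, ?_⟩ <;> rintro p ⟨hp₁, hp₂, hsum, hle⟩
    · exact ⟨hp₁, hp₂, hsum, (add_le_add (hp₁.2.2 hac₁) (hp₂.2.2 hac₂)).trans hle⟩
    · exact ⟨hp₁, hp₂, hsum, (add_le_add (hp₁.2.2 hbc₁) (hp₂.2.2 hbc₂)).trans hle⟩
  have hCne : ∀ c, (C c).Nonempty := by
    rintro ⟨⟨c₁, h₁⟩, ⟨c₂, h₂⟩⟩
    obtain ⟨_, ⟨l₁, l₂, hl₁, hl₂, hsum, rfl⟩, hlt⟩ := sInf_lt_iff.1 (hβ c₁ h₁ c₂ h₂)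
    exact ⟨(l₁, l₂), ⟨hl₁.1, hl₁.2.1, hl₁.2.2.1⟩, ⟨hl₂.1, hl₂.2.1, hl₂.2.2.1⟩,
      fun u => (hsum u).symm, hlt.le⟩
  let c₀ : T₁ × T₂ := (⟨_, hT₁.some_mem⟩, ⟨_, hT₂.some_mem⟩)
  have : Nonempty (T₁ × T₂) := ⟨c₀⟩
  obtain ⟨p, hp⟩ := IsCompact.nonempty_iInter_of_directed_nonempty_isCompact_isClosed C hCd hCne
    (fun c => (hC c).isCompact) hC
  simp only [Set.mem_iInter] at hp
  exact ⟨p.1, p.2, (hp c₀).1, (hp c₀).2.1, (hp c₀).2.2.1,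
    fun c₁ h₁ c₂ h₂ => (hp (⟨c₁, h₁⟩, ⟨c₂, h₂⟩)).2.2.2⟩

theorem hatInf_le_of_split (hP : PosOrdered (S := S)) (hO2 : AxO2 (S := S))
    (hO3 : AxO3 (S := S)) (hO4 : AxO4 (S := S)) (hO6 : AxO6 (S := S)) (hO7 : AxO7 (S := S))
    (hl : IsFunctional l) {x y : S} {α β : ℝ≥0∞} (hα : ∀ z, z ≤ x → z ≤ y → l z ≤ α)
    (hα_top : α ≠ ∞) {g₁ g₂ : S → ℝ≥0∞} (hg₁ : IsAdditiveMonotone g₁)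
    (hg₂ : IsAdditiveMonotone g₂) (hsum : ∀ u, g₁ u + g₂ u = l u)
    (hβ : ∀ c₁ ∈ finiteApprox l x, ∀ c₂ ∈ finiteApprox l y, g₁ c₁ + g₂ c₂ ≤ β) :
    hatInf x y l ≤ β := by
  set Kx := finiteIdealAdjoin l x
  set Ky := finiteIdealAdjoin l y
  have hK : Kx ∩ Ky = finiteIdeal l :=
    (finiteIdealAdjoin_inter_subset hl hO2 hO6 hα hα_top).antisymm fun s hs =>
      ⟨finiteIdeal_subset_finiteIdealAdjoin x hs, finiteIdeal_subset_finiteIdealAdjoin y hs⟩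
  refine sInf_le_of_le ⟨fun u => regularize l g₁ u + Kxᶜ.indicator (fun _ => ∞) u,
    fun u => regularize l g₂ u + Kyᶜ.indicator (fun _ => ∞) u,
    (isFunctional_regularize hP hO2 hO3 hO4 hO6 hl hg₁).add
      (isFunctional_indicator_compl_top hP (isIdeal_finiteIdealAdjoin hP hO2 hO4 hl x)),
    (isFunctional_regularize hP hO2 hO3 hO4 hO6 hl hg₂).add
      (isFunctional_indicator_compl_top hP (isIdeal_finiteIdealAdjoin hP hO2 hO4 hl y)),
    fun u => ?_, rfl⟩ ?_
  · calc l u = regularize l l u + (finiteIdeal l)ᶜ.indicator (fun _ => ∞) u :=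
          (regularize_self_add_indicator hO2 hl u).symm
      _ = (regularize l g₁ u + regularize l g₂ u) +
          (Kxᶜ.indicator (fun _ => ∞) u + Kyᶜ.indicator (fun _ => ∞) u) := by
        rw [regularize_add_regularize hP hO2 hO4 hO7 hl hg₁.2.2 hg₂.2.2 hsum,
          indicator_compl_top_add_indicator_compl_top, hK]
      _ = _ := add_add_add_comm _ _ _ _
  · have hx : x ∉ Kxᶜ := Set.notMem_compl_iff.2 (mem_finiteIdealAdjoin_self hl x)
    have hy : y ∉ Kyᶜ := Set.notMem_compl_iff.2 (mem_finiteIdealAdjoin_self hl y)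
    simp only [Set.indicator_of_notMem hx, Set.indicator_of_notMem hy, add_zero]
    exact ENNReal.biSup_add_biSup_le ⟨0, zero_mem_finiteApprox hP hl x⟩
      ⟨0, zero_mem_finiteApprox hP hl y⟩ hβ

end Splitting

theorem stmt18_general {S : Type*} [AddCommMonoid S] [PartialOrder S]
    (hCu : CuSemigroup (S := S)) (hO6 : AxO6 (S := S))
    (hO7 : AxO7 (S := S)) (l : S → ℝ≥0∞) (hl : IsFunctional l)
    (h : ∀ x y : S, l x < ∞ → l y < ∞ →
      hatInf x y l ≤ sSup {t : ℝ≥0∞ | ∃ z : S, z ≤ x ∧ z ≤ y ∧ t = l z}) :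
    EdwardsFor l := by
  obtain ⟨hP, -, hO2, hO3, hO4⟩ := hCu
  intro x y
  refine le_antisymm ?_ (sSup_le_hatInf x y)
  set α := sSup {t : ℝ≥0∞ | ∃ z : S, z ≤ x ∧ z ≤ y ∧ t = l z}
  have hα : ∀ z, z ≤ x → z ≤ y → l z ≤ α := fun z hzx hzy => le_sSup ⟨z, hzx, hzy, rfl⟩
  refine ENNReal.le_of_forall_pos_le_add fun ε hε hα_top => ?_
  have hlt : ∀ c₁ ∈ finiteApprox l x, ∀ c₂ ∈ finiteApprox l y, hatInf c₁ c₂ l < α + ε := by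
    intro c₁ hc₁ c₂ hc₂
    refine (h c₁ c₂ (apply_lt_top_of_mem_finiteApprox hc₁)
      (apply_lt_top_of_mem_finiteApprox hc₂)).trans_lt
        ((sSup_le ?_).trans_lt (ENNReal.lt_add_right hα_top.ne (by positivity)))
    rintro _ ⟨z, hz₁, hz₂, rfl⟩
    exact hα z (hz₁.trans (le_of_mem_finiteApprox hc₁)) (hz₂.trans (le_of_mem_finiteApprox hc₂))
  obtain ⟨g₁, g₂, hg₁, hg₂, hsum, hβ⟩ := exists_split_of_hatInf_lt
    ⟨0, zero_mem_finiteApprox hP hl x⟩ ⟨0, zero_mem_finiteApprox hP hl y⟩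
    (directedOn_finiteApprox hP hO2 hO4 hO7 hl x) (directedOn_finiteApprox hP hO2 hO4 hO7 hl y) hlt
  exact hatInf_le_of_split hP hO2 hO3 hO4 hO6 hO7 hl hα hα_top.ne hg₁ hg₂ hsum hβ

/-- to verify Edwards' condition for `λ`, it suffices to do so on pairs
of elements on which `λ` is finite. -/
theorem stmt18 {S : Type*} [AddCommMonoid S] [PartialOrder S]
    (hCu : CuSemigroup (S := S)) (hO5 : AxO5 (S := S)) (hO6 : AxO6 (S := S))
    (hO7 : AxO7 (S := S)) (l : S → ℝ≥0∞) (hl : IsFunctional l)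
    (h : ∀ x y : S, l x < ∞ → l y < ∞ →
      hatInf x y l ≤ sSup {t : ℝ≥0∞ | ∃ z : S, z ≤ x ∧ z ≤ y ∧ t = l z}) :
    EdwardsFor l :=
  stmt18_general hCu hO6 hO7 l hl h

end CuFormal
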